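/- Fix κ ∈ [2, ∞) and n ∈ ℕ. Let J = {x₀, …, x_n} ⊂ ℝ with x_j = Σ_{i=1}^{j} (κ+1)^i, Euclidean metric, counting measure μ. Then the modified noncentered maximal operator M̃_κ is of weak type (1,1) with constant 2, uniformly in n: for every f : J → [0,∞) and λ > 0, λ · μ({x ∈ J : M̃_κ f(x) > λ}) ≤ 2 Σ_{x ∈ J} f(x). -/

import Mathlib

open MeasureTheory
open scoped ENNReal

/-- The point `x_j = Σ_{i=1}^{j} (κ+1)^i` of the segment-type space. -/
noncomputable def xpt (κ : ℝ) (j : ℕ) : ℝ := ∑ i ∈ Finset.range j, (κ + 1) ^ (i + 1)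

/-- Counting measure on the set `J = {x₀, …, x_n}`. -/
noncomputable def μJ (κ : ℝ) (n : ℕ) : Measure ℝ :=
  Measure.sum fun j : Fin (n + 1) => Measure.dirac (xpt κ j)

/-- The modified noncentered Hardy–Littlewood maximal operator
`M̃_κ f(x) = sup_{B = B(z,s) ∋ x} (1/μ(κB)) ∫_B |f| dμ`, where `κB = B(z, κs)`. -/
noncomputable def modMaxN {X : Type*} [MetricSpace X] [MeasurableSpace X]
    (μ : Measure X) (κ : ℝ) (f : X → ℝ) (x : X) : ℝ≥0∞ :=
  ⨆ (z : X) (s : ℝ) (_ : x ∈ Metric.ball z s),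
    (μ (Metric.ball z (κ * s)))⁻¹ * ∫⁻ y in Metric.ball z s, ENNReal.ofReal |f y| ∂μ

lemma xpt_succ (κ : ℝ) (j : ℕ) : xpt κ (j+1) = xpt κ j + (κ+1)^(j+1) := by
  simp [xpt, Finset.sum_range_succ]

lemma xpt_nonneg {κ : ℝ} (hκ : 2 ≤ κ) (j : ℕ) : 0 ≤ xpt κ j :=
  Finset.sum_nonneg fun i _ => pow_nonneg (by linarith) _

lemma xpt_mono {κ : ℝ} (hκ : 2 ≤ κ) : Monotone (xpt κ) := by
  intro i j hij
  exact Finset.sum_le_sum_of_subset_of_nonneg (Finset.range_subset_range.2 hij)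
    (fun k _ _ => pow_nonneg (by linarith) _)

lemma xpt_gap {κ : ℝ} (hκ : 2 ≤ κ) {i j : ℕ} (h : i < j) :
    (κ+1)^(i+1) ≤ xpt κ j - xpt κ i := by
  have h1 : xpt κ (i+1) ≤ xpt κ j := xpt_mono hκ h
  rw [xpt_succ] at h1; linarith

lemma xpt_bound {κ : ℝ} (hκ : 2 ≤ κ) (i : ℕ) : κ * xpt κ i ≤ (κ+1)^(i+1) := by
  induction i with
  | zero => simp [xpt]; nlinarith
  | succ i ih =>
    rw [xpt_succ]
    have h : (κ+1)^(i+1+1) = (κ+1) * (κ+1)^(i+1) := by ring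
    nlinarith [pow_nonneg (show (0:ℝ) ≤ κ+1 by linarith) (i+1)]

lemma ball_prefix {κ : ℝ} (hκ : 2 ≤ κ) {i j k : ℕ} {z s : ℝ} (hij : i < j) (hk : k ≤ j)
    (hi : |xpt κ i - z| < s) (hj : |xpt κ j - z| < s) : |xpt κ k - z| < κ * s := by
  have hs : 0 < s := lt_of_le_of_lt (abs_nonneg _) hi
  have ha := abs_lt.1 hi
  have hb := abs_lt.1 hj
  have hgap := xpt_gap hκ hij
  have hbound := xpt_bound hκ i
  have hxk0 := xpt_nonneg hκ k
  have hxkj : xpt κ k ≤ xpt κ j := xpt_mono hκ hk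
  have hxi0 := xpt_nonneg hκ i
  rw [abs_lt]
  constructor
  · nlinarith [mul_nonneg (sub_nonneg.2 hκ) hs.le, mul_nonneg (sub_nonneg.2 hκ) hxi0]
  · nlinarith [mul_nonneg (sub_nonneg.2 hκ) hs.le]

open Classical in
lemma muJ_apply (κ : ℝ) (n : ℕ) {A : Set ℝ} (hA : MeasurableSet A) :
    μJ κ n A = ∑ k ∈ Finset.range (n+1), (if xpt κ k ∈ A then (1:ℝ≥0∞) else 0) := by
  rw [μJ, Measure.sum_apply _ hA, tsum_fintype, ← Fin.sum_univ_eq_sum_range]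
  refine Finset.sum_congr rfl fun j _ => ?_
  rw [Measure.dirac_apply]
  by_cases h : xpt κ (j:ℕ) ∈ A <;> simp [Set.indicator_apply, h]

lemma muJ_lintegral (κ : ℝ) (n : ℕ) (g : ℝ → ℝ≥0∞) :
    ∫⁻ y, g y ∂(μJ κ n) = ∑ k ∈ Finset.range (n+1), g (xpt κ k) := by
  rw [μJ, lintegral_sum_measure, tsum_fintype, ← Fin.sum_univ_eq_sum_range]
  exact Finset.sum_congr rfl fun j _ => lintegral_dirac _ g

open Classical in
lemma muJ_setLintegral (κ : ℝ) (n : ℕ) (g : ℝ → ℝ≥0∞) {B : Set ℝ} (hB : MeasurableSet B) :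
    ∫⁻ y in B, g y ∂(μJ κ n)
      = ∑ k ∈ (Finset.range (n+1)).filter (fun k => xpt κ k ∈ B), g (xpt κ k) := by
  rw [← lintegral_indicator hB g, muJ_lintegral, Finset.sum_filter]
  refine Finset.sum_congr rfl fun k _ => ?_
  by_cases h : xpt κ k ∈ B <;> simp [Set.indicator_apply, h]

theorem stmt_13 (κ : ℝ) (hκ : 2 ≤ κ) (n : ℕ)
    (f : ℝ → ℝ) (hf0 : ∀ y, 0 ≤ f y) (lam : ℝ≥0∞) (hlam : 0 < lam) :
    lam * μJ κ n {y | lam < modMaxN (μJ κ n) κ f y}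
      ≤ 2 * ∫⁻ y, ENNReal.ofReal (f y) ∂(μJ κ n) := by
  classical
  rcases eq_or_ne lam ⊤ with rfl | hlamtop
  · have hE : {y | (⊤:ℝ≥0∞) < modMaxN (μJ κ n) κ f y} = ∅ := by
      ext y; simp [not_top_lt]
    simp [hE]
  set G : ℕ → ℝ≥0∞ := fun k => ENNReal.ofReal (f (xpt κ k)) with hG
  set T := ∑ k ∈ Finset.range (n+1), G k with hTdef
  have hT : ∫⁻ y, ENNReal.ofReal (f y) ∂(μJ κ n) = T := muJ_lintegral κ n _
  set E := {y | lam < modMaxN (μJ κ n) κ f y} with hE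
  set P := (Finset.range (n+1)).filter (fun k => xpt κ k ∈ E) with hP
  -- Step 1: μ E ≤ P.card
  have hμE : μJ κ n E ≤ (P.card : ℝ≥0∞) := by
    set S : Finset ℝ := (Finset.range (n+1)).image (xpt κ) with hS
    have hsub : E ⊆ (E ∩ ↑S) ∪ (↑S : Set ℝ)ᶜ := by
      intro y hy
      by_cases h : y ∈ (↑S : Set ℝ)
      · exact Or.inl ⟨hy, h⟩
      · exact Or.inr h
    refine le_trans (measure_mono hsub) (le_trans (measure_union_le _ _) ?_)
    have h1 : μJ κ n ((↑S : Set ℝ)ᶜ) = 0 := by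
      rw [muJ_apply κ n (S.measurableSet.compl)]
      refine Finset.sum_eq_zero fun k hk => ?_
      have : xpt κ k ∈ (↑S : Set ℝ) := by
        simp only [hS, Finset.coe_image, Set.mem_image, Finset.mem_coe]
        exact ⟨k, by simpa using hk, rfl⟩
      simp [this]
    have h2 : μJ κ n (E ∩ ↑S) ≤ (P.card : ℝ≥0∞) := by
      rw [muJ_apply κ n ?hm]
      case hm =>
        have : (E ∩ ↑S : Set ℝ) = ↑(S.filter (fun x => x ∈ E)) := by
          ext y; simp [Set.mem_inter_iff, and_comm]
        rw [this]; exact Finset.measurableSet _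
      have : (P.card : ℝ≥0∞) = ∑ k ∈ Finset.range (n+1), (if xpt κ k ∈ E then (1:ℝ≥0∞) else 0) := by
        have h0 : (P.card : ℝ≥0∞) = ∑ k ∈ P, (1:ℝ≥0∞) := by simp
        rw [h0, hP, Finset.sum_filter]
      rw [this]
      refine Finset.sum_le_sum fun k _ => ?_
      by_cases h : xpt κ k ∈ E ∩ ↑S
      · simp [h, h.1]
      · simp [h]
    rw [h1, add_zero] at *
    exact h2
  -- Step 2: key dichotomy
  have key : ∀ j ∈ P, lam ≤ G j ∨ lam * ((j+1 : ℕ) : ℝ≥0∞) ≤ T := by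
    intro j hj
    rw [hP, Finset.mem_filter, Finset.mem_range] at hj
    obtain ⟨hjn, hjE⟩ := hj
    rw [hE, Set.mem_setOf_eq, modMaxN] at hjE
    simp only [lt_iSup_iff] at hjE
    obtain ⟨z, s, hxball, hlt⟩ := hjE
    set Q := (Finset.range (n+1)).filter (fun k => xpt κ k ∈ Metric.ball z s) with hQdef
    have hInt : ∫⁻ y in Metric.ball z s, ENNReal.ofReal |f y| ∂(μJ κ n) = ∑ k ∈ Q, G k := by
      rw [muJ_setLintegral κ n _ measurableSet_ball]
      exact Finset.sum_congr rfl fun k _ => by rw [abs_of_nonneg (hf0 _)]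
    rw [hInt] at hlt
    have hjQ : j ∈ Q := by
      rw [hQdef, Finset.mem_filter, Finset.mem_range]; exact ⟨hjn, hxball⟩
    have hs : 0 < s := by
      have := Metric.mem_ball.1 hxball
      exact lt_of_le_of_lt dist_nonneg this
    have hsκ : s ≤ κ * s := by nlinarith
    by_cases hQsingle : Q = {j}
    · left
      have hμ1 : (1:ℝ≥0∞) ≤ μJ κ n (Metric.ball z (κ * s)) := by
        rw [muJ_apply κ n measurableSet_ball]
        have hmem : xpt κ j ∈ Metric.ball z (κ * s) :=
          Metric.mem_ball.2 (lt_of_lt_of_le (Metric.mem_ball.1 hxball) hsκ)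
        calc (1:ℝ≥0∞) = (if xpt κ j ∈ Metric.ball z (κ*s) then (1:ℝ≥0∞) else 0) := by simp [hmem]
          _ ≤ _ := Finset.single_le_sum (f := fun k => (if xpt κ k ∈ Metric.ball z (κ*s) then (1:ℝ≥0∞) else 0))
                (fun k _ => zero_le) (Finset.mem_range.2 hjn)
      have := hlt.le
      rw [hQsingle, Finset.sum_singleton] at this
      calc lam ≤ (μJ κ n (Metric.ball z (κ * s)))⁻¹ * G j := this
        _ ≤ 1 * G j := mul_le_mul_left (ENNReal.inv_le_one.2 hμ1) _
        _ = G j := one_mul _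
    · right
      have hQne : Q.Nonempty := ⟨j, hjQ⟩
      set p := Q.max' hQne with hp
      have hpQ : p ∈ Q := Q.max'_mem hQne
      have hjp : j ≤ p := Q.le_max' j hjQ
      obtain ⟨q, hqQ, hqp⟩ : ∃ q ∈ Q, q ≠ p := by
        by_contra h
        push_neg at h
        have hQp : Q = {p} := Finset.eq_singleton_iff_unique_mem.2 ⟨hpQ, h⟩
        have : j = p := h j hjQ
        exact hQsingle (by rw [hQp, this])
      have hqlt : q < p := lt_of_le_of_ne (Q.le_max' q hqQ) hqp
      have hpn : p ≤ n := by
        have := Finset.mem_range.1 (Finset.mem_filter.1 hpQ).1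
        omega
      have hqball : xpt κ q ∈ Metric.ball z s := (Finset.mem_filter.1 hqQ).2
      have hpball : xpt κ p ∈ Metric.ball z s := (Finset.mem_filter.1 hpQ).2
      have hcov : ∀ k ≤ p, xpt κ k ∈ Metric.ball z (κ * s) := by
        intro k hk
        have h1 : |xpt κ q - z| < s := by rw [← Real.dist_eq]; exact Metric.mem_ball.1 hqball
        have h2 : |xpt κ p - z| < s := by rw [← Real.dist_eq]; exact Metric.mem_ball.1 hpball
        have := ball_prefix hκ hqlt hk h1 h2
        rw [Metric.mem_ball, Real.dist_eq]; exact this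
      have hμp : ((p+1 : ℕ) : ℝ≥0∞) ≤ μJ κ n (Metric.ball z (κ * s)) := by
        rw [muJ_apply κ n measurableSet_ball]
        calc ((p+1:ℕ) : ℝ≥0∞) = ∑ k ∈ Finset.range (p+1), (1:ℝ≥0∞) := by simp
          _ = ∑ k ∈ Finset.range (p+1), (if xpt κ k ∈ Metric.ball z (κ*s) then (1:ℝ≥0∞) else 0) :=
              Finset.sum_congr rfl fun k hk =>
                (if_pos (hcov k (Nat.lt_succ_iff.1 (Finset.mem_range.1 hk)))).symm
          _ ≤ _ := Finset.sum_le_sum_of_subset (Finset.range_subset_range.2 (by omega))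
      have hμtop : μJ κ n (Metric.ball z (κ * s)) ≠ ⊤ := by
        rw [muJ_apply κ n measurableSet_ball]
        refine ne_top_of_le_ne_top (b := ((n+1 : ℕ) : ℝ≥0∞)) (ENNReal.natCast_ne_top _) ?_
        calc ∑ k ∈ Finset.range (n+1), (if xpt κ k ∈ Metric.ball z (κ*s) then (1:ℝ≥0∞) else 0)
            ≤ ∑ k ∈ Finset.range (n+1), (1:ℝ≥0∞) := Finset.sum_le_sum fun k _ => by split <;> simp
          _ = ((n+1:ℕ) : ℝ≥0∞) := by simp
      have hμ0 : μJ κ n (Metric.ball z (κ * s)) ≠ 0 := by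
        intro h
        rw [h] at hμp
        simp at hμp
      have hmul : lam * μJ κ n (Metric.ball z (κ * s)) ≤ ∑ k ∈ Q, G k := by
        calc lam * μJ κ n (Metric.ball z (κ * s))
            ≤ ((μJ κ n (Metric.ball z (κ * s)))⁻¹ * ∑ k ∈ Q, G k) * μJ κ n (Metric.ball z (κ * s)) :=
              mul_le_mul_left hlt.le _
          _ = ∑ k ∈ Q, G k := by
              rw [mul_comm, ← mul_assoc, ENNReal.mul_inv_cancel hμ0 hμtop, one_mul]
      have hQT : ∑ k ∈ Q, G k ≤ T := Finset.sum_le_sum_of_subset (Finset.filter_subset _ _)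
      calc lam * ((j+1:ℕ) : ℝ≥0∞) ≤ lam * ((p+1:ℕ) : ℝ≥0∞) :=
            mul_le_mul_right (Nat.cast_le.2 (by omega)) _
        _ ≤ lam * μJ κ n (Metric.ball z (κ * s)) := mul_le_mul_right hμp _
        _ ≤ T := hmul.trans hQT
  -- Step 3: assemble
  set P1 := P.filter (fun j => lam ≤ G j) with hP1
  set P2 := P \ P1 with hP2
  have hcardsn : P1.card + P2.card = P.card := by
    have hle : (P.filter (fun j => lam ≤ G j)).card ≤ P.card :=
      Finset.card_le_card (Finset.filter_subset _ _)
    rw [hP2, hP1, Finset.card_sdiff_of_subset (Finset.filter_subset _ _)]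
    omega
  have hcards : (P.card : ℝ≥0∞) = (P1.card : ℝ≥0∞) + (P2.card : ℝ≥0∞) := by
    rw [← hcardsn]; push_cast; ring
  have h1 : lam * (P1.card : ℝ≥0∞) ≤ T := by
    have heq : lam * (P1.card : ℝ≥0∞) = ∑ j ∈ P1, lam := by
      rw [Finset.sum_const, nsmul_eq_mul, mul_comm]
    rw [heq]
    calc ∑ j ∈ P1, lam ≤ ∑ j ∈ P1, G j :=
        Finset.sum_le_sum fun j hj => (Finset.mem_filter.1 hj).2
      _ ≤ T := Finset.sum_le_sum_of_subset
          ((Finset.filter_subset _ _).trans (Finset.filter_subset _ _))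
  have h2 : lam * (P2.card : ℝ≥0∞) ≤ T := by
    rcases P2.eq_empty_or_nonempty with h | hne
    · rw [h]; simp
    · set m := P2.max' hne with hm
      have hmP2 : m ∈ P2 := P2.max'_mem hne
      have hmP : m ∈ P := (Finset.mem_sdiff.1 hmP2).1
      have hnot : ¬ lam ≤ G m := by
        have hnm := (Finset.mem_sdiff.1 hmP2).2
        intro hle; exact hnm (Finset.mem_filter.2 ⟨hmP, hle⟩)
      have hkey := (key m hmP).resolve_left hnot
      have hsub : P2 ⊆ Finset.range (m+1) := fun k hk =>
        Finset.mem_range.2 (Nat.lt_succ_of_le (P2.le_max' k hk))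
      have hcard2 : P2.card ≤ m+1 := by
        simpa using Finset.card_le_card hsub
      calc lam * (P2.card : ℝ≥0∞) ≤ lam * ((m+1:ℕ):ℝ≥0∞) :=
          mul_le_mul_right (Nat.cast_le.2 hcard2) _
        _ ≤ T := hkey
  calc lam * μJ κ n E ≤ lam * (P.card:ℝ≥0∞) := mul_le_mul_right hμE _
    _ = lam * (P1.card:ℝ≥0∞) + lam * (P2.card:ℝ≥0∞) := by rw [hcards, mul_add]
    _ ≤ T + T := add_le_add h1 h2
    _ = 2 * T := (two_mul T).symm
    _ = 2 * ∫⁻ y, ENNReal.ofReal (f y) ∂(μJ κ n) := by rw [hT]
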